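/- arXiv:2006.05691 — 4 statements merged into one kernel-verified Lean document; each statement's English description precedes it below -/
import Mathlib

section
/- Let G be a finite directed graph on vertex set V. The maximum of rank(W) over all weighted adjacency matrices W of G equals the minimum size of a head-tail vertex cover of G, i.e., max{rank(W) : W ∈ ℝ^{V×V}, W(X,Y) ≠ 0 ↔ X→Y is an edge of G} = min{|H| + |T| : (H,T) is a head-tail vertex cover of G}. -/
open Finset Matrix

lemma aux_rank_le_cover {V : Type*} [Fintype V] [DecidableEq V]
    (W : Matrix V V ℝ) (H T : Finset V)
    (h : ∀ X Y, W X Y ≠ 0 → Y ∈ H ∨ X ∈ T) :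
    W.rank ≤ H.card + T.card := by
  classical
  set A : Matrix V V ℝ := fun X Y => if Y ∈ H then W X Y else 0 with hA
  set B : Matrix V V ℝ := fun X Y => if Y ∈ H then 0 else W X Y with hB
  have hW : W = A + B := by
    ext X Y
    by_cases hy : Y ∈ H <;> rw [Matrix.add_apply] <;> simp [hA, hB, hy]
  -- rank A ≤ H.card
  have hrA : A.rank ≤ H.card := by
    set A₁ : Matrix V H ℝ := fun X y => W X y with hA₁
    set Q : Matrix H V ℝ := fun y Y => if Y = (y : V) then 1 else 0 with hQ
    have : A = A₁ * Q := by
      ext X Y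
      rw [mul_apply]
      simp only [hA₁, hQ, mul_ite, mul_one, mul_zero]
      rw [Finset.sum_coe_sort H (fun y => if Y = y then W X y else 0),
        Finset.sum_ite_eq H Y (fun y => W X y)]
    calc A.rank ≤ A₁.rank := by rw [this]; exact rank_mul_le_left _ _
    _ ≤ Fintype.card H := rank_le_card_width _
    _ = H.card := Fintype.card_coe H
  have hrB : B.rank ≤ T.card := by
    set B₁ : Matrix T V ℝ := fun x Y => B x Y with hB₁
    set P : Matrix V T ℝ := fun X x => if X = (x : V) then 1 else 0 with hP
    have : B = P * B₁ := by
      ext X Y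
      rw [mul_apply]
      simp only [hP, hB₁, ite_mul, one_mul, zero_mul]
      rw [Finset.sum_coe_sort T (fun x => if X = x then B x Y else 0),
        Finset.sum_ite_eq T X (fun x => B x Y)]
      split
      · rfl
      · -- X ∉ T, show B X Y = 0
        by_cases hy : Y ∈ H
        · simp [hB, hy]
        · simp only [hB, hy, if_neg, if_false]
          by_contra hne
          rcases h X Y hne with h1 | h2
          · exact hy h1
          · exact ‹X ∉ T› h2
    calc B.rank ≤ B₁.rank := by rw [this]; exact rank_mul_le_right _ _
    _ ≤ Fintype.card T := rank_le_card_height _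
    _ = T.card := Fintype.card_coe T
  -- subadditivity
  have hsub : W.rank ≤ A.rank + B.rank := by
    have hle : LinearMap.range W.mulVecLin ≤
        LinearMap.range A.mulVecLin ⊔ LinearMap.range B.mulVecLin := by
      rintro x ⟨v, rfl⟩
      have : W.mulVecLin v = A.mulVecLin v + B.mulVecLin v := by
        simp [hW, add_mulVec]
      rw [this]
      exact Submodule.add_mem_sup (LinearMap.mem_range_self _ v) (LinearMap.mem_range_self _ v)
    calc W.rank = Module.finrank ℝ ↥(LinearMap.range W.mulVecLin) := rfl
    _ ≤ Module.finrank ℝ ↥(LinearMap.range A.mulVecLin ⊔ LinearMap.range B.mulVecLin) :=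
        Submodule.finrank_mono hle
    _ ≤ A.rank + B.rank := Submodule.finrank_add_le_finrank_add_finrank _ _
  omega

lemma aux_exists_matrix_rank_ge {V : Type*} [Fintype V] [DecidableEq V]
    (E : V → V → Prop) (M : Finset (V × V))
    (hME : ∀ p ∈ M, E p.1 p.2)
    (h1 : Set.InjOn Prod.fst (M : Set (V × V)))
    (h2 : Set.InjOn Prod.snd (M : Set (V × V))) :
    ∃ W : Matrix V V ℝ, (∀ X Y, W X Y ≠ 0 ↔ E X Y) ∧ M.card ≤ W.rank := by
  classical
  set N : Matrix V V ℝ := fun X Y => if E X Y then 1 else 0 with hN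
  set Mm : Matrix V V ℝ := fun X Y => if (X, Y) ∈ M then 1 else 0 with hMm
  set f : M → V := fun p => (p : V × V).1 with hf
  set g : M → V := fun p => (p : V × V).2 with hg
  -- the submatrix as a function of ε
  set F : ℝ → Matrix M M ℝ := fun ε => (Mm + ε • N).submatrix f g with hF
  have hF0 : F 0 = 1 := by
    ext p q
    simp only [hF, Matrix.submatrix_apply, Matrix.add_apply, Matrix.smul_apply, zero_smul,
      add_zero, hf, hg]
    simp only [hMm]
    have hiff : ((p : V × V).1, (q : V × V).2) ∈ M ↔ p = q := by
      constructor
      · intro hm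
        have hp := p.2
        have hq := q.2
        have e1 : ((p : V × V).1, (q : V × V).2) = (p : V × V) := by
          apply h1 hm hp
          rfl
        have e2 : ((p : V × V).1, (q : V × V).2) = (q : V × V) := by
          apply h2 hm hq
          rw [e1]
          exact congrArg Prod.snd e1.symm ▸ rfl
        exact Subtype.ext (e1 ▸ e2 ▸ rfl)
      · rintro rfl
        simpa using p.2
    by_cases hpq : p = q
    · simp [hpq, hiff, Matrix.one_apply]
    · have : ((p : V × V).1, (q : V × V).2) ∉ M := fun hm => hpq (hiff.mp hm)
      simp [hpq, this, Matrix.one_apply]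
  -- det (F ε) is continuous in ε and nonzero at 0, so nonzero for some small ε > 0
  have hcont : Continuous fun ε : ℝ => (F ε).det := by
    apply Continuous.matrix_det
    apply continuous_pi; intro p; apply continuous_pi; intro q
    simp only [hF, Matrix.submatrix_apply, Matrix.add_apply, Matrix.smul_apply, smul_eq_mul]
    exact (continuous_const.add ((continuous_id.mul continuous_const)))
  have hne0 : (F 0).det ≠ 0 := by rw [hF0]; simp
  have hev : ∀ᶠ ε in nhdsWithin 0 (Set.Ioi (0:ℝ)), (F ε).det ≠ 0 := by
    have : ∀ᶠ ε in nhds (0:ℝ), (F ε).det ≠ 0 := by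
      have := hcont.continuousAt (x := (0:ℝ))
      exact this.eventually_ne hne0
    exact this.filter_mono nhdsWithin_le_nhds
  obtain ⟨ε, hdet, hε⟩ := (hev.and (eventually_mem_nhdsWithin)).exists
  have hεpos : 0 < ε := hε
  refine ⟨Mm + ε • N, ?_, ?_⟩
  · intro X Y
    constructor
    · intro hne
      by_contra hE
      have hXYM : (X, Y) ∉ M := fun hm => hE (hME _ hm)
      rw [Matrix.add_apply, Matrix.smul_apply] at hne
      simp [hMm, hN, hXYM, hE] at hne
    · intro hE
      have : (Mm + ε • N) X Y = (if (X, Y) ∈ M then (1:ℝ) else 0) + ε := by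
        rw [Matrix.add_apply, Matrix.smul_apply]
        simp [hMm, hN, hE]
      rw [this]
      split <;> positivity
  · -- rank bound via the submatrix
    have hrankF : (F ε).rank = M.card := by
      rw [Matrix.rank_of_isUnit _ ((Matrix.isUnit_iff_isUnit_det _).mpr (isUnit_iff_ne_zero.mpr hdet))]
      exact Fintype.card_coe M
    -- F ε = P * ((Mm + ε • N) * Q)
    set P : Matrix M V ℝ := fun p k => if k = f p then 1 else 0 with hP
    set Q : Matrix V M ℝ := fun k q => if k = g q then 1 else 0 with hQ
    have hfac : F ε = P * ((Mm + ε • N) * Q) := by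
      ext p q
      rw [Matrix.mul_apply]
      have : ∀ k, P p k * ((Mm + ε • N) * Q) k q
          = if k = f p then ((Mm + ε • N) * Q) k q else 0 := by
        intro k; simp [hP]
      simp_rw [this, Finset.sum_ite_eq' Finset.univ (f p), if_pos (Finset.mem_univ _)]
      rw [Matrix.mul_apply]
      have : ∀ k, (Mm + ε • N) (f p) k * Q k q
          = if k = g q then (Mm + ε • N) (f p) k else 0 := by
        intro k; simp [hQ]
      simp_rw [this, Finset.sum_ite_eq' Finset.univ (g q), if_pos (Finset.mem_univ _)]
      simp [hF]
    calc M.card = (F ε).rank := hrankF.symm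
    _ ≤ ((Mm + ε • N) * Q).rank := by rw [hfac]; exact rank_mul_le_right _ _
    _ ≤ (Mm + ε • N).rank := rank_mul_le_left _ _

lemma aux_konig {V : Type*} [Fintype V] [DecidableEq V]
    (E : V → V → Prop) [DecidableRel E] :
    ∃ (M : Finset (V × V)) (H T : Finset V),
      (∀ p ∈ M, E p.1 p.2) ∧ Set.InjOn Prod.fst (M : Set (V × V)) ∧
      Set.InjOn Prod.snd (M : Set (V × V)) ∧
      (∀ X Y, E X Y → Y ∈ H ∨ X ∈ T) ∧ H.card + T.card ≤ M.card := by
  classical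
  set nbr : V → Finset V := fun x => Finset.univ.filter (fun y => E x y) with hnbr
  set NS : Finset V → Finset V := fun S => S.biUnion nbr with hNS
  set d : Finset V → ℤ := fun S => (S.card : ℤ) - ((NS S).card : ℤ) with hd
  obtain ⟨S, -, hS⟩ := Finset.exists_max_image (Finset.univ : Finset (Finset V)) d
    ⟨∅, Finset.mem_univ _⟩
  have hSmax : ∀ S' : Finset V, d S' ≤ d S := fun S' => hS S' (Finset.mem_univ _)
  -- Hall application 1 : match Sᶜ into V \ NS S
  have hall1 : ∃ f : ↥(Sᶜ) → V, Function.Injective f ∧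
      ∀ x : ↥(Sᶜ), f x ∈ nbr (x : V) \ NS S := by
    rw [← Finset.all_card_le_biUnion_card_iff_exists_injective
      (fun x : ↥(Sᶜ) => nbr (x : V) \ NS S)]
    intro s
    set X : Finset V := s.image Subtype.val with hX
    have hcardX : X.card = s.card := Finset.card_image_of_injective _ Subtype.val_injective
    have hdisj : Disjoint S X := by
      rw [Finset.disjoint_right]
      intro a ha
      simp only [hX, Finset.mem_image] at ha
      obtain ⟨x, -, rfl⟩ := ha
      exact fun hmem => (Finset.mem_compl.mp x.2) hmem
    have hbi : s.biUnion (fun x : ↥(Sᶜ) => nbr (x : V) \ NS S) = NS X \ NS S := by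
      ext z
      constructor
      · intro hz
        obtain ⟨x, hx, hzx⟩ := Finset.mem_biUnion.mp hz
        rcases Finset.mem_sdiff.mp hzx with ⟨hz1, hz2⟩
        refine Finset.mem_sdiff.mpr ⟨?_, hz2⟩
        exact Finset.mem_biUnion.mpr ⟨(x : V), Finset.mem_image.mpr ⟨x, hx, rfl⟩, hz1⟩
      · intro hz
        rcases Finset.mem_sdiff.mp hz with ⟨hz1, hz2⟩
        obtain ⟨a, ha, hza⟩ := Finset.mem_biUnion.mp hz1
        obtain ⟨x, hx, rfl⟩ := Finset.mem_image.mp ha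
        exact Finset.mem_biUnion.mpr ⟨x, hx, Finset.mem_sdiff.mpr ⟨hza, hz2⟩⟩
    rw [hbi]
    have hmax := hSmax (S ∪ X)
    have hcardU : (S ∪ X).card = S.card + X.card := Finset.card_union_of_disjoint hdisj
    have hNSU : NS (S ∪ X) = NS S ∪ NS X := by
      ext z
      simp only [hNS, Finset.mem_biUnion, Finset.mem_union]
      constructor
      · rintro ⟨a, ha | ha, hz⟩
        exacts [Or.inl ⟨a, ha, hz⟩, Or.inr ⟨a, ha, hz⟩]
      · rintro (⟨a, ha, hz⟩ | ⟨a, ha, hz⟩)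
        exacts [⟨a, Or.inl ha, hz⟩, ⟨a, Or.inr ha, hz⟩]
    have hsd : (NS X \ NS S).card + (NS S).card = (NS X ∪ NS S).card :=
      Finset.card_sdiff_add_card _ _
    have hcle : ((NS S ∪ NS X).card : ℤ) = (NS X ∪ NS S).card := by rw [Finset.union_comm]
    simp only [hd, hcardU, hNSU] at hmax
    have : (X.card : ℤ) ≤ ((NS X \ NS S).card : ℤ) := by
      push_cast at hmax hsd ⊢
      linarith
    exact_mod_cast hcardX ▸ this
  -- Hall application 2 : match NS S into S
  have hall2 : ∃ g : ↥(NS S) → V, Function.Injective g ∧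
      ∀ y : ↥(NS S), g y ∈ S.filter (fun x => E x (y : V)) := by
    rw [← Finset.all_card_le_biUnion_card_iff_exists_injective
      (fun y : ↥(NS S) => S.filter (fun x => E x (y : V)))]
    intro s
    set Y : Finset V := s.image Subtype.val with hY
    have hcardY : Y.card = s.card := Finset.card_image_of_injective _ Subtype.val_injective
    have hYsub : Y ⊆ NS S := by
      intro z hz
      obtain ⟨y, -, rfl⟩ := Finset.mem_image.mp hz
      exact y.2
    set P : Finset V := s.biUnion (fun y : ↥(NS S) => S.filter (fun x => E x (y : V))) with hP
    have hPsub : P ⊆ S := by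
      intro x hx
      obtain ⟨y, -, hxy⟩ := Finset.mem_biUnion.mp hx
      exact (Finset.mem_filter.mp hxy).1
    have hNsub : NS (S \ P) ⊆ NS S \ Y := by
      intro z hz
      obtain ⟨x, hx, hzx⟩ := Finset.mem_biUnion.mp hz
      have hxS : x ∈ S := (Finset.mem_sdiff.mp hx).1
      have hxP : x ∉ P := (Finset.mem_sdiff.mp hx).2
      refine Finset.mem_sdiff.mpr ⟨Finset.mem_biUnion.mpr ⟨x, hxS, hzx⟩, ?_⟩
      intro hzY
      obtain ⟨y, hy, rfl⟩ := Finset.mem_image.mp hzY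
      apply hxP
      refine Finset.mem_biUnion.mpr ⟨y, hy, Finset.mem_filter.mpr ⟨hxS, ?_⟩⟩
      have : (y : V) ∈ nbr x := hzx
      simpa [hnbr] using this
    have hmax := hSmax (S \ P)
    have hc1 : ((S \ P).card : ℤ) = (S.card : ℤ) - P.card := by
      rw [Finset.card_sdiff_of_subset hPsub]
      exact_mod_cast Nat.cast_sub (Finset.card_le_card hPsub)
    have hc2 : ((NS S \ Y).card : ℤ) = ((NS S).card : ℤ) - Y.card := by
      rw [Finset.card_sdiff_of_subset hYsub]
      exact_mod_cast Nat.cast_sub (Finset.card_le_card hYsub)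
    have hc3 : ((NS (S \ P)).card : ℤ) ≤ ((NS S \ Y).card : ℤ) := by
      exact_mod_cast Finset.card_le_card hNsub
    simp only [hd] at hmax
    have : (Y.card : ℤ) ≤ (P.card : ℤ) := by linarith
    exact_mod_cast hcardY ▸ this
  obtain ⟨f, hfinj, hf⟩ := hall1
  obtain ⟨g, hginj, hg⟩ := hall2
  -- the matching
  set M₁ : Finset (V × V) := (Sᶜ).attach.image (fun x => (Subtype.val x, f x)) with hM₁
  set M₂ : Finset (V × V) := (NS S).attach.image (fun y => (g y, Subtype.val y)) with hM₂
  have hM₁mem : ∀ p ∈ M₁, ∃ x : ↥(Sᶜ), p = ((x : V), f x) := by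
    intro p hp
    obtain ⟨x, -, rfl⟩ := Finset.mem_image.mp hp
    exact ⟨x, rfl⟩
  have hM₂mem : ∀ p ∈ M₂, ∃ y : ↥(NS S), p = (g y, (y : V)) := by
    intro p hp
    obtain ⟨y, -, rfl⟩ := Finset.mem_image.mp hp
    exact ⟨y, rfl⟩
  have hfnbr : ∀ x : ↥(Sᶜ), E (x : V) (f x) := by
    intro x
    have := (Finset.mem_sdiff.mp (hf x)).1
    simpa [hnbr] using this
  have hfns : ∀ x : ↥(Sᶜ), f x ∉ NS S := fun x => (Finset.mem_sdiff.mp (hf x)).2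
  have hgS : ∀ y : ↥(NS S), g y ∈ S := fun y => (Finset.mem_filter.mp (hg y)).1
  have hgE : ∀ y : ↥(NS S), E (g y) (y : V) := fun y => (Finset.mem_filter.mp (hg y)).2
  refine ⟨M₁ ∪ M₂, NS S, Sᶜ, ?_, ?_, ?_, ?_, ?_⟩
  · -- edges
    intro p hp
    rcases Finset.mem_union.mp hp with h | h
    · obtain ⟨x, rfl⟩ := hM₁mem p h; exact hfnbr x
    · obtain ⟨y, rfl⟩ := hM₂mem p h; exact hgE y
  · -- InjOn fst
    intro p hp q hq hpq
    rcases Finset.mem_union.mp hp with h | h <;> rcases Finset.mem_union.mp hq with h' | h'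
    · obtain ⟨x, rfl⟩ := hM₁mem p h; obtain ⟨x', rfl⟩ := hM₁mem q h'
      have : x = x' := Subtype.ext hpq
      rw [this]
    · obtain ⟨x, rfl⟩ := hM₁mem p h; obtain ⟨y, rfl⟩ := hM₂mem q h'
      have hpq' : (x : V) = g y := hpq
      exact absurd (hpq' ▸ hgS y) (Finset.mem_compl.mp x.2)
    · obtain ⟨y, rfl⟩ := hM₂mem p h; obtain ⟨x, rfl⟩ := hM₁mem q h'
      have hpq' : g y = (x : V) := hpq
      exact absurd (hpq' ▸ hgS y) (Finset.mem_compl.mp x.2)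
    · obtain ⟨y, rfl⟩ := hM₂mem p h; obtain ⟨y', rfl⟩ := hM₂mem q h'
      have : y = y' := hginj hpq
      rw [this]
  · -- InjOn snd
    intro p hp q hq hpq
    rcases Finset.mem_union.mp hp with h | h <;> rcases Finset.mem_union.mp hq with h' | h'
    · obtain ⟨x, rfl⟩ := hM₁mem p h; obtain ⟨x', rfl⟩ := hM₁mem q h'
      have : x = x' := hfinj hpq
      rw [this]
    · obtain ⟨x, rfl⟩ := hM₁mem p h; obtain ⟨y, rfl⟩ := hM₂mem q h'
      have hpq' : f x = (y : V) := hpq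
      exact absurd (hpq' ▸ y.2) (hfns x)
    · obtain ⟨y, rfl⟩ := hM₂mem p h; obtain ⟨x, rfl⟩ := hM₁mem q h'
      have hpq' : (y : V) = f x := hpq
      exact absurd (hpq'.symm ▸ y.2) (hfns x)
    · obtain ⟨y, rfl⟩ := hM₂mem p h; obtain ⟨y', rfl⟩ := hM₂mem q h'
      have : y = y' := Subtype.ext hpq
      rw [this]
  · -- cover
    intro X Y hXY
    by_cases hXS : X ∈ S
    · exact Or.inl (Finset.mem_biUnion.mpr ⟨X, hXS, by simp [hnbr, hXY]⟩)
    · exact Or.inr (Finset.mem_compl.mpr hXS)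
  · -- cardinality
    have hdisjM : Disjoint M₁ M₂ := by
      rw [Finset.disjoint_left]
      intro p hp hp'
      obtain ⟨x, rfl⟩ := hM₁mem p hp
      obtain ⟨y, hy⟩ := hM₂mem _ hp'
      have : (x : V) = g y := congrArg Prod.fst hy
      exact (Finset.mem_compl.mp x.2) (this ▸ hgS y)
    have hc1 : M₁.card = (Sᶜ).card := by
      rw [hM₁, Finset.card_image_of_injective _ ?_, Finset.card_attach]
      intro a b hab
      exact Subtype.ext (congrArg Prod.fst hab)
    have hc2 : M₂.card = (NS S).card := by
      rw [hM₂, Finset.card_image_of_injective _ ?_, Finset.card_attach]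
      intro a b hab
      exact Subtype.ext (congrArg Prod.snd hab)
    rw [Finset.card_union_of_disjoint hdisjM, hc1, hc2]
    omega

/-- For a finite directed graph with edge relation `E` on vertex set `V`,
the maximum rank of a weighted adjacency matrix of the graph equals the minimum size
of a head-tail vertex cover. -/
theorem max_rank_eq_min_head_tail_cover
    {V : Type*} [Fintype V] [DecidableEq V] (E : V → V → Prop) :
    sSup {r : ℕ | ∃ W : Matrix V V ℝ, (∀ X Y : V, W X Y ≠ 0 ↔ E X Y) ∧ W.rank = r} =
      sInf {c : ℕ | ∃ H T : Finset V,
        (∀ X Y : V, E X Y → Y ∈ H ∨ X ∈ T) ∧ H.card + T.card = c} := by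
  classical
  set Ssup := {r : ℕ | ∃ W : Matrix V V ℝ, (∀ X Y : V, W X Y ≠ 0 ↔ E X Y) ∧ W.rank = r}
  set Sinf := {c : ℕ | ∃ H T : Finset V,
    (∀ X Y : V, E X Y → Y ∈ H ∨ X ∈ T) ∧ H.card + T.card = c}
  have hne1 : Ssup.Nonempty := by
    refine ⟨(Matrix.of fun X Y => if E X Y then (1:ℝ) else 0).rank,
      Matrix.of fun X Y => if E X Y then (1:ℝ) else 0, ?_, rfl⟩
    intro X Y
    by_cases h : E X Y <;> simp [h]
  have hbdd : BddAbove Ssup := by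
    refine ⟨Fintype.card V, ?_⟩
    rintro r ⟨W, -, rfl⟩
    exact W.rank_le_card_width
  have hne2 : Sinf.Nonempty :=
    ⟨Finset.univ.card + Finset.univ.card, Finset.univ, Finset.univ,
      fun X Y _ => Or.inl (Finset.mem_univ _), rfl⟩
  apply le_antisymm
  · apply csSup_le hne1
    rintro r ⟨W, hW, rfl⟩
    obtain ⟨H, T, hcov, hcard⟩ := Nat.sInf_mem hne2
    rw [← hcard]
    exact aux_rank_le_cover W H T (fun X Y h => hcov X Y ((hW X Y).mp h))
  · obtain ⟨M, H, T, hME, h1, h2, hcov, hcard⟩ := aux_konig E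
    obtain ⟨W, hW, hrank⟩ := aux_exists_matrix_rank_ge E M hME h1 h2
    calc sInf Sinf ≤ H.card + T.card := Nat.sInf_le ⟨H, T, hcov, rfl⟩
    _ ≤ M.card := hcard
    _ ≤ W.rank := hrank
    _ ≤ sSup Ssup := le_csSup hbdd ⟨W, hW, rfl⟩
end

section
/- Let G be a finite directed graph. The minimum size of a head-tail vertex cover of G equals the maximum cardinality of a set M of edges of G such that no two distinct edges in M have the same tail and no two distinct edges in M have the same head. -/
/-- The minimum size of a head-tail vertex cover of a finite directed graph
equals the maximum cardinality of a set of edges no two of which share a tail or a head. -/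
theorem min_head_tail_cover_eq_max_matching
    {V : Type*} [Fintype V] [DecidableEq V] (E : V → V → Prop) :
    sInf {c : ℕ | ∃ H T : Finset V,
        (∀ X Y : V, E X Y → Y ∈ H ∨ X ∈ T) ∧ H.card + T.card = c} =
      sSup {m : ℕ | ∃ M : Finset (V × V), (∀ e ∈ M, E e.1 e.2) ∧
        (∀ e ∈ M, ∀ f ∈ M, e ≠ f → e.1 ≠ f.1 ∧ e.2 ≠ f.2) ∧ M.card = m} := by
  classical
  set Scov : Set ℕ := {c : ℕ | ∃ H T : Finset V,
      (∀ X Y : V, E X Y → Y ∈ H ∨ X ∈ T) ∧ H.card + T.card = c} with hScov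
  set Smat : Set ℕ := {m : ℕ | ∃ M : Finset (V × V), (∀ e ∈ M, E e.1 e.2) ∧
      (∀ e ∈ M, ∀ f ∈ M, e ≠ f → e.1 ≠ f.1 ∧ e.2 ≠ f.2) ∧ M.card = m} with hSmat
  have hcovne : Scov.Nonempty := ⟨Fintype.card V, Finset.univ, ∅,
    fun X Y _ => Or.inl (Finset.mem_univ Y), by simp⟩
  have hmatne : Smat.Nonempty := ⟨0, ∅, by simp, by simp, by simp⟩
  have hmatbdd : BddAbove Smat := by
    refine ⟨Fintype.card (V × V), fun m hm => ?_⟩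
    obtain ⟨M, _, _, rfl⟩ := hm
    simpa using Finset.card_le_card (Finset.subset_univ M)
  -- the minimum cover
  obtain ⟨H, T, hcov, hcard⟩ := Nat.sInf_mem hcovne
  -- every matching has size ≤ any cover size
  have hle : sSup Smat ≤ sInf Scov := by
    obtain ⟨M, hME, hMm, hMc⟩ := Nat.sSup_mem hmatne hmatbdd
    rw [← hcard, ← hMc]
    have h1 : (M.filter (fun e => e.2 ∈ H)).card ≤ H.card := by
      apply Finset.card_le_card_of_injOn (fun e => e.2)
      · intro e he; exact (Finset.mem_filter.mp he).2
      · intro a ha b hb hab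
        by_contra hne
        exact (hMm a (Finset.mem_filter.mp ha).1 b (Finset.mem_filter.mp hb).1 hne).2 hab
    have h2 : (M.filter (fun e => e.2 ∉ H)).card ≤ T.card := by
      apply Finset.card_le_card_of_injOn (fun e => e.1)
      · intro e he
        rcases Finset.mem_filter.mp he with ⟨heM, heH⟩
        rcases hcov e.1 e.2 (hME e heM) with h | h
        · exact absurd h heH
        · exact h
      · intro a ha b hb hab
        by_contra hne
        exact (hMm a (Finset.mem_filter.mp ha).1 b (Finset.mem_filter.mp hb).1 hne).1 hab
    calc M.card = (M.filter (fun e => e.2 ∈ H)).card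
        + (M.filter (fun e => e.2 ∉ H)).card :=
          (Finset.card_filter_add_card_filter_not (s := M) (fun e : V × V => e.2 ∈ H)).symm
      _ ≤ H.card + T.card := Nat.add_le_add h1 h2
  -- Hall condition on H side
  set tH : ↥H → Finset V := fun h => Finset.univ.filter (fun x => E x ↑h ∧ x ∉ T) with htH
  have hallH : ∀ s : Finset ↥H, s.card ≤ (s.biUnion tH).card := by
    intro s
    by_contra hlt
    push_neg at hlt
    set H' := H \ s.image Subtype.val with hH'
    set T' := T ∪ s.biUnion tH with hT'
    have hcov' : ∀ X Y : V, E X Y → Y ∈ H' ∨ X ∈ T' := by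
      intro X Y hE
      rcases hcov X Y hE with hY | hX
      · by_cases hYs : Y ∈ s.image Subtype.val
        · obtain ⟨h, hs, rfl⟩ := Finset.mem_image.mp hYs
          by_cases hXT : X ∈ T
          · exact Or.inr (Finset.mem_union_left _ hXT)
          · refine Or.inr (Finset.mem_union_right _ ?_)
            exact Finset.mem_biUnion.mpr ⟨h, hs, by simp [htH, hE, hXT]⟩
        · exact Or.inl (Finset.mem_sdiff.mpr ⟨hY, hYs⟩)
      · exact Or.inr (Finset.mem_union_left _ hX)
    have hsub : s.image Subtype.val ⊆ H := by
      intro x hx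
      obtain ⟨h, _, rfl⟩ := Finset.mem_image.mp hx
      exact h.2
    have himg : (s.image Subtype.val).card = s.card :=
      Finset.card_image_of_injective _ Subtype.val_injective
    have hH'card : H'.card = H.card - s.card := by
      rw [hH', Finset.card_sdiff_of_subset hsub, himg]
    have hsH : s.card ≤ H.card := by rw [← himg]; exact Finset.card_le_card hsub
    have hT'card : T'.card ≤ T.card + (s.biUnion tH).card := Finset.card_union_le _ _
    have hmem : H'.card + T'.card ∈ Scov := ⟨H', T', hcov', rfl⟩
    have := Nat.sInf_le hmem
    omega
  obtain ⟨f, hfinj, hf⟩ := (Finset.all_card_le_biUnion_card_iff_exists_injective tH).mp hallH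
  -- Hall condition on T side
  set tT : ↥T → Finset V := fun t => Finset.univ.filter (fun y => E ↑t y ∧ y ∉ H) with htT
  have hallT : ∀ s : Finset ↥T, s.card ≤ (s.biUnion tT).card := by
    intro s
    by_contra hlt
    push_neg at hlt
    set H' := H ∪ s.biUnion tT with hH'
    set T' := T \ s.image Subtype.val with hT'
    have hcov' : ∀ X Y : V, E X Y → Y ∈ H' ∨ X ∈ T' := by
      intro X Y hE
      rcases hcov X Y hE with hY | hX
      · exact Or.inl (Finset.mem_union_left _ hY)
      · by_cases hXs : X ∈ s.image Subtype.val
        · obtain ⟨t, hs, rfl⟩ := Finset.mem_image.mp hXs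
          by_cases hYH : Y ∈ H
          · exact Or.inl (Finset.mem_union_left _ hYH)
          · refine Or.inl (Finset.mem_union_right _ ?_)
            exact Finset.mem_biUnion.mpr ⟨t, hs, by simp [htT, hE, hYH]⟩
        · exact Or.inr (Finset.mem_sdiff.mpr ⟨hX, hXs⟩)
    have hsub : s.image Subtype.val ⊆ T := by
      intro x hx
      obtain ⟨t, _, rfl⟩ := Finset.mem_image.mp hx
      exact t.2
    have himg : (s.image Subtype.val).card = s.card :=
      Finset.card_image_of_injective _ Subtype.val_injective
    have hT'card : T'.card = T.card - s.card := by
      rw [hT', Finset.card_sdiff_of_subset hsub, himg]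
    have hsT : s.card ≤ T.card := by rw [← himg]; exact Finset.card_le_card hsub
    have hH'card : H'.card ≤ H.card + (s.biUnion tT).card := Finset.card_union_le _ _
    have hmem : H'.card + T'.card ∈ Scov := ⟨H', T', hcov', rfl⟩
    have := Nat.sInf_le hmem
    omega
  obtain ⟨g, hginj, hg⟩ := (Finset.all_card_le_biUnion_card_iff_exists_injective tT).mp hallT
  have hfE : ∀ h : ↥H, E (f h) ↑h ∧ f h ∉ T := by
    intro h
    have := hf h
    simp only [htH, Finset.mem_filter, Finset.mem_univ, true_and] at this
    exact this
  have hgE : ∀ t : ↥T, E ↑t (g t) ∧ g t ∉ H := by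
    intro t
    have := hg t
    simp only [htT, Finset.mem_filter, Finset.mem_univ, true_and] at this
    exact this
  -- build the matching of size H.card + T.card
  set M1 : Finset (V × V) := H.attach.image (fun h => (f h, (h : V))) with hM1
  set M2 : Finset (V × V) := T.attach.image (fun t : ↥T => ((t : V), g t)) with hM2
  have hM1mem : ∀ e ∈ M1, ∃ h : ↥H, e = (f h, (h : V)) := by
    intro e he
    obtain ⟨h, _, rfl⟩ := Finset.mem_image.mp he
    exact ⟨h, rfl⟩
  have hM2mem : ∀ e ∈ M2, ∃ t : ↥T, e = ((t : V), g t) := by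
    intro e he
    obtain ⟨t, _, rfl⟩ := Finset.mem_image.mp he
    exact ⟨t, rfl⟩
  have hmatch : sInf Scov ∈ Smat := by
    refine ⟨M1 ∪ M2, ?_, ?_, ?_⟩
    · intro e he
      rcases Finset.mem_union.mp he with h | h
      · obtain ⟨h0, rfl⟩ := hM1mem e h; exact (hfE h0).1
      · obtain ⟨t0, rfl⟩ := hM2mem e h; exact (hgE t0).1
    · intro e he e' he' hne
      rcases Finset.mem_union.mp he with h | h <;>
        rcases Finset.mem_union.mp he' with h' | h'
      · obtain ⟨a, rfl⟩ := hM1mem e h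
        obtain ⟨b, rfl⟩ := hM1mem e' h'
        have hab : a ≠ b := by rintro rfl; exact hne rfl
        exact ⟨fun hh => hab (hfinj hh), fun hh => hab (Subtype.val_injective hh)⟩
      · obtain ⟨a, rfl⟩ := hM1mem e h
        obtain ⟨b, rfl⟩ := hM2mem e' h'
        constructor
        · intro hh
          have h1 : f a = (b : V) := hh
          exact (hfE a).2 (by rw [h1]; exact b.2)
        · intro hh
          have h1 : (a : V) = g b := hh
          exact (hgE b).2 (by rw [← h1]; exact a.2)
      · obtain ⟨a, rfl⟩ := hM2mem e h
        obtain ⟨b, rfl⟩ := hM1mem e' h'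
        constructor
        · intro hh
          have h1 : (a : V) = f b := hh
          exact (hfE b).2 (by rw [← h1]; exact a.2)
        · intro hh
          have h1 : g a = (b : V) := hh
          exact (hgE a).2 (by rw [h1]; exact b.2)
      · obtain ⟨a, rfl⟩ := hM2mem e h
        obtain ⟨b, rfl⟩ := hM2mem e' h'
        have hab : a ≠ b := by rintro rfl; exact hne rfl
        exact ⟨fun hh => hab (Subtype.val_injective hh), fun hh => hab (hginj hh)⟩
    · have hdisj : Disjoint M1 M2 := by
        rw [Finset.disjoint_left]
        intro e he he'
        obtain ⟨a, rfl⟩ := hM1mem e he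
        obtain ⟨b, hb⟩ := hM2mem _ he'
        have : (a : V) = g b := congrArg Prod.snd hb
        exact (hgE b).2 (this ▸ a.2)
      have hc1 : M1.card = H.card := by
        rw [hM1, Finset.card_image_of_injective, Finset.card_attach]
        intro a b hab
        exact Subtype.val_injective (congrArg Prod.snd hab)
      have hc2 : M2.card = T.card := by
        rw [hM2, Finset.card_image_of_injective, Finset.card_attach]
        intro a b hab
        exact Subtype.val_injective (congrArg Prod.fst hab)
      rw [Finset.card_union_of_disjoint hdisj, hc1, hc2, hcard]
  exact le_antisymm (le_csSup hmatbdd hmatch) hle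
end

section
/- Let A be a d×d matrix with entries in {0,1}. The maximum of rank(W) over all real d×d matrices W satisfying W(i,j) ≠ 0 if and only if A(i,j) = 1 equals the maximum number of entries of A equal to 1, no two of which lie in a common row or in a common column (the term rank of A). -/
open Matrix Module Submodule

/-- Row extraction: `r` linearly independent rows where `r` is the rank. -/
lemma my_exists_indep_rows {a b r : ℕ} (W : Matrix (Fin a) (Fin b) ℝ) (h : W.rank = r) :
    ∃ f : Fin r → Fin a, Function.Injective f ∧
      LinearIndependent ℝ (fun x => W (f x)) := by
  subst h
  obtain ⟨s, hs_sub, hspan, hli⟩ := exists_linearIndependent ℝ (Set.range W)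
  have hfin : s.Finite := hli.setFinite
  haveI : Fintype s := hfin.fintype
  have hcard : s.toFinset.card = W.rank := by
    rw [← finrank_span_set_eq_card hli, hspan, W.rank_eq_finrank_span_row]
    rfl
  have hcard' : Fintype.card s = W.rank := by rwa [Set.toFinset_card] at hcard
  let e : Fin W.rank ≃ s := (Fintype.equivFinOfCardEq hcard').symm
  have hch : ∀ v : s, W ((hs_sub v.2).choose) = v := fun v => (hs_sub v.2).choose_spec
  refine ⟨fun x => (hs_sub (e x).2).choose, ?_, ?_⟩
  · intro x y hxy
    have : ((e x : Fin b → ℝ)) = (e y : Fin b → ℝ) := by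
      rw [← hch (e x), ← hch (e y)]; exact congrArg W hxy
    exact e.injective (Subtype.ext this)
  · have : (fun x => W ((hs_sub (e x).2).choose)) = fun x => ((e x : Fin b → ℝ)) := by
      funext x; exact hch (e x)
    rw [this]
    exact hli.comp e e.injective

/-- Nonvanishing minor of size `rank`. -/
lemma my_exists_invertible_minor {n r : ℕ} (W : Matrix (Fin n) (Fin n) ℝ) (h : W.rank = r) :
    ∃ f g : Fin r → Fin n, Function.Injective f ∧ Function.Injective g ∧
      IsUnit (W.submatrix f g) := by
  obtain ⟨f, hfinj, hfli⟩ := my_exists_indep_rows W h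
  set B : Matrix (Fin r) (Fin n) ℝ := W.submatrix f id with hB
  have hBli : LinearIndependent ℝ B := hfli
  have hBrank : Bᵀ.rank = r := by
    rw [Matrix.rank_transpose]
    exact hBli.rank_matrix.trans (Fintype.card_fin r)
  obtain ⟨g, hginj, hgli⟩ := my_exists_indep_rows Bᵀ hBrank
  set C : Matrix (Fin r) (Fin r) ℝ := Bᵀ.submatrix g id with hC
  have hCli : LinearIndependent ℝ (fun i => C i) := hgli
  have hCunit : IsUnit C := Matrix.linearIndependent_rows_iff_isUnit.mp hCli
  refine ⟨f, g, hfinj, hginj, ?_⟩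
  have : W.submatrix f g = Cᵀ := by
    ext i j; rfl
  rw [this]
  exact (Matrix.isUnit_transpose C).mpr hCunit

/-- Rank of a submatrix (arbitrary index maps) is at most the rank. -/
lemma my_rank_submatrix_le {r d : ℕ} (W : Matrix (Fin d) (Fin d) ℝ) (f g : Fin r → Fin d) :
    (W.submatrix f g).rank ≤ W.rank := by
  classical
  have hEq : W.submatrix f g =
      (Matrix.of fun i k => if f i = k then (1:ℝ) else 0) * W *
      (Matrix.of fun k j => if k = g j then (1:ℝ) else 0) := by
    ext i j
    simp [Matrix.mul_apply, Finset.sum_ite_eq, Finset.sum_ite_eq', ite_mul, mul_ite,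
      Finset.mul_sum, Finset.sum_mul]
  rw [hEq]
  exact le_trans (Matrix.rank_mul_le_left _ _) (Matrix.rank_mul_le_right _ _)



/-- For a 0-1 matrix `A`, the maximum rank over all real matrices whose
support is exactly the support of `A` equals the term rank of `A` (the maximum number
of 1-entries of `A`, no two in a common row or column). -/
theorem max_rank_eq_term_rank
    {d : ℕ} (A : Matrix (Fin d) (Fin d) ℝ) (hA : ∀ i j, A i j = 0 ∨ A i j = 1) :
    sSup {r : ℕ | ∃ W : Matrix (Fin d) (Fin d) ℝ,
        (∀ i j, W i j ≠ 0 ↔ A i j = 1) ∧ W.rank = r} =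
      sSup {m : ℕ | ∃ M : Finset (Fin d × Fin d), (∀ p ∈ M, A p.1 p.2 = 1) ∧
        (∀ p ∈ M, ∀ q ∈ M, p ≠ q → p.1 ≠ q.1 ∧ p.2 ≠ q.2) ∧ M.card = m} := by
  classical
  set S1 := {r : ℕ | ∃ W : Matrix (Fin d) (Fin d) ℝ,
      (∀ i j, W i j ≠ 0 ↔ A i j = 1) ∧ W.rank = r} with hS1
  set S2 := {m : ℕ | ∃ M : Finset (Fin d × Fin d), (∀ p ∈ M, A p.1 p.2 = 1) ∧
      (∀ p ∈ M, ∀ q ∈ M, p ≠ q → p.1 ≠ q.1 ∧ p.2 ≠ q.2) ∧ M.card = m} with hS2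
  have hS1ne : S1.Nonempty := ⟨A.rank, A, fun i j => by
    rcases hA i j with h | h <;> simp [h], rfl⟩
  have hS2ne : S2.Nonempty := ⟨0, ∅, by simp, by simp, rfl⟩
  have hS1bdd : BddAbove S1 := by
    refine ⟨d, fun r hr => ?_⟩
    obtain ⟨W, -, hrank⟩ := hr
    exact hrank ▸ W.rank_le_width
  have hS2bdd : BddAbove S2 := by
    refine ⟨d * d, fun m hm => ?_⟩
    obtain ⟨M, -, -, hcard⟩ := hm
    calc m = M.card := hcard.symm
      _ ≤ (Finset.univ : Finset (Fin d × Fin d)).card := Finset.card_le_univ M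
      _ = d * d := by simp
  apply le_antisymm
  · -- every achievable rank is at most some matching size
    refine csSup_le hS1ne fun r hr => ?_
    obtain ⟨W, hsupp, hrank⟩ := hr
    obtain ⟨f, g, hf, hg, hunit⟩ := my_exists_invertible_minor W hrank
    have hdet : (W.submatrix f g).det ≠ 0 := by
      have := (Matrix.isUnit_iff_isUnit_det _).mp hunit
      exact this.ne_zero
    -- extract a permutation with all entries nonzero
    have hσ : ∃ σ : Equiv.Perm (Fin r), ∀ i, W (f (σ i)) (g i) ≠ 0 := by
      by_contra hcon
      push_neg at hcon
      apply hdet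
      rw [Matrix.det_apply]
      refine Finset.sum_eq_zero fun σ _ => ?_
      obtain ⟨i, hi⟩ := hcon σ
      rw [Finset.prod_eq_zero (Finset.mem_univ i) (by simpa using hi)]
      simp
    obtain ⟨σ, hσ⟩ := hσ
    refine le_csSup hS2bdd ?_
    refine ⟨Finset.image (fun i => (f (σ i), g i)) Finset.univ, ?_, ?_, ?_⟩
    · rintro p hp
      simp only [Finset.mem_image, Finset.mem_univ, true_and] at hp
      obtain ⟨i, rfl⟩ := hp
      exact (hsupp _ _).mp (hσ i)
    · rintro p hp q hq hpq
      simp only [Finset.mem_image, Finset.mem_univ, true_and] at hp hq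
      obtain ⟨i, rfl⟩ := hp
      obtain ⟨j, rfl⟩ := hq
      have hij : i ≠ j := by rintro rfl; exact hpq rfl
      exact ⟨fun h => hij (σ.injective (hf h)), fun h => hij (hg h)⟩
    · rw [Finset.card_image_of_injective _ (fun i j h => hg (congrArg Prod.snd h)),
        Finset.card_univ, Fintype.card_fin]
  · -- every matching size is at most some achievable rank
    refine csSup_le hS2ne fun m hm => ?_
    obtain ⟨M, hM1, hM2, hMcard⟩ := hm
    let e : Fin m ≃ ↥M := (M.equivFin.trans (finCongr hMcard)).symm
    set f : Fin m → Fin d := fun i => (e i : Fin d × Fin d).1 with hfdef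
    set g : Fin m → Fin d := fun i => (e i : Fin d × Fin d).2 with hgdef
    have hcoords : ∀ i j : Fin m, (f i, g j) ∈ M → i = j := by
      intro i j hij
      have h1 : (f i, g j) = (e i : Fin d × Fin d) := by
        by_contra hne2
        exact (hM2 _ hij _ (e i).2 hne2).1 rfl
      have h2 : (f i, g j) = (e j : Fin d × Fin d) := by
        by_contra hne2
        exact (hM2 _ hij _ (e j).2 hne2).2 rfl
      exact e.injective (Subtype.ext (h1.symm.trans h2))
    have hf : Function.Injective f := by
      intro i j hij
      apply e.injective
      apply Subtype.ext
      by_contra hne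
      exact (hM2 _ (e i).2 _ (e j).2 (fun h => hne h)).1 hij
    have hg : Function.Injective g := by
      intro i j hij
      apply e.injective
      apply Subtype.ext
      by_contra hne
      exact (hM2 _ (e i).2 _ (e j).2 (fun h => hne h)).2 hij
    -- the polynomial matrix
    set P : Matrix (Fin m) (Fin m) (Polynomial ℝ) := Matrix.of fun i j =>
      if i = j then 1 else if A (f i) (g j) = 1 then Polynomial.X else 0 with hP
    have hP0 : P.map (Polynomial.eval 0) = 1 := by
      ext i j
      by_cases h : i = j
      · simp [hP, h, Matrix.one_apply]
      · simp only [hP, Matrix.map_apply, Matrix.of_apply, if_neg h, Matrix.one_apply, if_neg h]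
        split <;> simp
    have hPdet : P.det ≠ 0 := by
      intro h0
      have : (P.map (Polynomial.eval 0)).det = (0 : ℝ) := by
        rw [show P.map (Polynomial.eval 0) = (Polynomial.evalRingHom 0).mapMatrix P from rfl,
          ← RingHom.map_det]
        simp [h0]
      rw [hP0, Matrix.det_one] at this
      exact one_ne_zero this
    -- choose a good ε
    obtain ⟨ε, hε⟩ := Infinite.exists_notMem_finset (Polynomial.X * P.det).roots.toFinset
    have hXP : Polynomial.X * P.det ≠ 0 := mul_ne_zero Polynomial.X_ne_zero hPdet
    have heval : (Polynomial.X * P.det).eval ε ≠ 0 := by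
      intro h0
      exact hε (Multiset.mem_toFinset.mpr ((Polynomial.mem_roots hXP).mpr h0))
    rw [Polynomial.eval_mul, Polynomial.eval_X] at heval
    have hεne : ε ≠ 0 := fun h => heval (by simp [h])
    have hPev : P.det.eval ε ≠ 0 := fun h => heval (by simp [h])
    -- the witness matrix
    set W : Matrix (Fin d) (Fin d) ℝ := Matrix.of fun i j =>
      if (i, j) ∈ M then 1 else if A i j = 1 then ε else 0 with hW
    have hWsupp : ∀ i j, W i j ≠ 0 ↔ A i j = 1 := by
      intro i j
      constructor
      · intro hne
        by_contra hne1
        have hnM : (i, j) ∉ M := fun hmem => hne1 (hM1 _ hmem)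
        simp [hW, hnM, hne1] at hne
      · intro h1
        by_cases hmem : (i, j) ∈ M <;> simp [hW, hmem, h1, hεne]
    have hsub : W.submatrix f g = P.map (Polynomial.eval ε) := by
      ext i j
      by_cases h : i = j
      · subst h
        have hmem : (f i, g i) ∈ M := (e i).2
        simp [hW, hP, hmem]
      · have hnM : (f i, g j) ∉ M := fun hmem => h (hcoords i j hmem)
        simp only [Matrix.submatrix_apply, hW, hP, Matrix.of_apply, Matrix.map_apply, hnM,
          if_false, if_neg h]
        split <;> simp
    have hdetW : (W.submatrix f g).det ≠ 0 := by
      rw [hsub, show P.map (Polynomial.eval ε) = (Polynomial.evalRingHom ε).mapMatrix P from rfl,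
        ← RingHom.map_det]
      simp
      exact hPev
    have hunit : IsUnit (W.submatrix f g) :=
      (Matrix.isUnit_iff_isUnit_det _).mpr (isUnit_iff_ne_zero.mpr hdetW)
    have hranksub : (W.submatrix f g).rank = m := by
      rw [Matrix.rank_of_isUnit _ hunit, Fintype.card_fin]
    have hle : m ≤ W.rank := hranksub ▸ my_rank_submatrix_le W f g
    exact le_trans hle (le_csSup hS1bdd ⟨W, hWsupp, rfl⟩)
end

section
/- Let G be a finite DAG on vertex set V that contains a directed path X_0 → X_1 → ⋯ → X_ℓ with ℓ edges, and let W be any weighted adjacency matrix of G. Then rank(W) ≥ ℓ. In particular, rank(W) ≥ l(G), the length of the longest directed path in G. -/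
/-- There is a directed path with `ℓ` edges starting at `X` in the graph with edge
relation `E`. -/
def HasPathFrom {V : Type*} (E : V → V → Prop) (X : V) (ℓ : ℕ) : Prop :=
  ∃ p : Fin (ℓ + 1) → V, p 0 = X ∧ ∀ i : Fin ℓ, E (p i.castSucc) (p i.succ)

/-- The level of a vertex `X`: the number of edges in a longest directed path
starting at `X`. -/
noncomputable def level {V : Type*} (E : V → V → Prop) (X : V) : ℕ :=
  sSup {ℓ : ℕ | HasPathFrom E X ℓ}

/-- The level of the graph: the number of edges in a longest directed path. -/
noncomputable def glevel {V : Type*} [Fintype V] (E : V → V → Prop) : ℕ :=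
  Finset.univ.sup fun X : V => level E X

/-- The set of vertices of level `s`. -/
def levelSet {V : Type*} (E : V → V → Prop) (s : ℕ) : Set V :=
  {X | level E X = s}

section Aux
variable {V : Type*} (E : V → V → Prop)

lemma path_transGen {ℓ : ℕ} (p : Fin (ℓ + 1) → V)
    (hp : ∀ i : Fin ℓ, E (p i.castSucc) (p i.succ)) :
    ∀ i j : Fin (ℓ + 1), i < j → Relation.TransGen E (p i) (p j) := by
  intro i j
  induction j using Fin.induction with
  | zero => intro h; exact absurd h (Nat.not_lt_zero _)
  | succ j ih =>
    intro h
    have hv : i.val < j.val + 1 := by simpa [Fin.lt_def] using h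
    rcases Nat.lt_or_ge i.val j.val with h' | h'
    · exact (ih (by simpa [Fin.lt_def] using h')).tail (hp j)
    · have : i = j.castSucc := Fin.ext (by simp; omega)
      exact Relation.TransGen.single (this ▸ hp j)

lemma path_len_lt [Fintype V] (hacyc : ∀ X : V, ¬ Relation.TransGen E X X)
    {X : V} {ℓ : ℕ} (h : HasPathFrom E X ℓ) : ℓ < Fintype.card V := by
  obtain ⟨p, -, hp⟩ := h
  have hinj : Function.Injective p := by
    intro i j hij
    by_contra hne
    rcases lt_trichotomy i j with h | h | h
    · exact hacyc (p j) (hij ▸ path_transGen E p hp i j h)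
    · exact hne h
    · exact hacyc (p j) (hij ▸ path_transGen E p hp j i h)
  have := Fintype.card_le_of_injective p hinj
  simpa using this

variable [Fintype V]

lemma pathSet_bddAbove (hacyc : ∀ X : V, ¬ Relation.TransGen E X X) (X : V) :
    BddAbove {ℓ : ℕ | HasPathFrom E X ℓ} :=
  ⟨Fintype.card V, fun _ h => le_of_lt (path_len_lt E hacyc h)⟩

lemma pathSet_nonempty (X : V) : (0 : ℕ) ∈ {ℓ : ℕ | HasPathFrom E X ℓ} :=
  ⟨fun _ => X, rfl, fun i => absurd i.2 (Nat.not_lt_zero _)⟩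

lemma level_mem (hacyc : ∀ X : V, ¬ Relation.TransGen E X X) (X : V) :
    HasPathFrom E X (level E X) :=
  Nat.sSup_mem ⟨0, pathSet_nonempty E X⟩ (pathSet_bddAbove E hacyc X)

lemma level_lt_of_edge (hacyc : ∀ X : V, ¬ Relation.TransGen E X X)
    {X Y : V} (h : E X Y) : level E Y < level E X := by
  obtain ⟨q, hq0, hq⟩ := level_mem E hacyc Y
  have hXp : HasPathFrom E X (level E Y + 1) := by
    refine ⟨Fin.cons X q, Fin.cons_zero _ _, fun i => ?_⟩
    induction i using Fin.cases with
    | zero => simpa [hq0] using h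
    | succ i =>
      rw [show (Fin.succ i).castSucc = i.castSucc.succ from Fin.ext rfl]
      simp only [Fin.cons_succ]
      exact hq i
  have h2 : level E Y + 1 ≤ level E X :=
    le_csSup (pathSet_bddAbove E hacyc X) hXp
  omega

lemma level_lt_of_transGen (hacyc : ∀ X : V, ¬ Relation.TransGen E X X)
    {X Y : V} (h : Relation.TransGen E X Y) : level E Y < level E X := by
  induction h with
  | single h => exact level_lt_of_edge E hacyc h
  | tail _ h ih => exact lt_trans (level_lt_of_edge E hacyc h) ih

lemma rank_ge_of_path [DecidableEq V] (hacyc : ∀ X : V, ¬ Relation.TransGen E X X)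
    (W : Matrix V V ℝ) (hW : ∀ X Y : V, W X Y ≠ 0 ↔ E X Y)
    (ℓ : ℕ) (p : Fin (ℓ + 1) → V) (hp : ∀ i : Fin ℓ, E (p i.castSucc) (p i.succ)) :
    ℓ ≤ W.rank := by
  set r : Fin ℓ → V := fun i => p i.castSucc with hr
  set c : Fin ℓ → V := fun j => p j.succ with hc
  set M : Matrix (Fin ℓ) (Fin ℓ) ℝ := W.submatrix r c with hM
  have hlev : ∀ i j : Fin (ℓ + 1), i < j → level E (p j) < level E (p i) :=
    fun i j h => level_lt_of_transGen E hacyc (path_transGen E p hp i j h)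
  have htri : M.BlockTriangular id := by
    intro i j hij
    by_contra hne
    have hE : E (p i.castSucc) (p j.succ) := (hW _ _).mp hne
    have h1 : level E (p j.succ) < level E (p i.castSucc) :=
      level_lt_of_edge E hacyc hE
    have h2 : j.succ ≤ i.castSucc := by
      simp only [Fin.le_def, Fin.val_succ, Fin.coe_castSucc]
      exact hij
    rcases lt_or_eq_of_le h2 with h2 | h2
    · exact absurd (hlev _ _ h2) (by omega)
    · rw [h2] at h1; omega
  have hdet : M.det ≠ 0 := by
    rw [Matrix.det_of_upperTriangular htri]
    exact Finset.prod_ne_zero_iff.mpr fun i _ => (hW _ _).mpr (hp i)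
  have hrankM : M.rank = ℓ := by
    rw [Matrix.rank_of_isUnit M ((Matrix.isUnit_iff_isUnit_det M).mpr
      (isUnit_iff_ne_zero.mpr hdet))]
    simp
  have key : M = ((1 : Matrix V V ℝ).submatrix r (Equiv.refl V)) *
      (W * ((1 : Matrix V V ℝ).submatrix (Equiv.refl V) c)) := by
    rw [Matrix.mul_submatrix_one, Matrix.one_submatrix_mul]
    simp [hM]
  calc ℓ = M.rank := hrankM.symm
    _ ≤ (W * ((1 : Matrix V V ℝ).submatrix (Equiv.refl V) c)).rank :=
        key ▸ Matrix.rank_mul_le_right _ _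
    _ ≤ W.rank := Matrix.rank_mul_le_left _ _

end Aux

/-- In a finite DAG containing a directed path with `ℓ` edges, every
weighted adjacency matrix `W` satisfies `rank W ≥ ℓ`; in particular
`rank W ≥ l(G)`, the level of the graph. -/
theorem rank_ge_path_length
    {V : Type*} [Fintype V] [DecidableEq V] (E : V → V → Prop)
    (hacyc : ∀ X : V, ¬ Relation.TransGen E X X)
    (W : Matrix V V ℝ) (hW : ∀ X Y : V, W X Y ≠ 0 ↔ E X Y)
    (ℓ : ℕ) (p : Fin (ℓ + 1) → V) (hp : ∀ i : Fin ℓ, E (p i.castSucc) (p i.succ)) :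
    ℓ ≤ W.rank ∧ glevel E ≤ W.rank := by
  refine ⟨rank_ge_of_path E hacyc W hW ℓ p hp, ?_⟩
  refine Finset.sup_le fun X _ => ?_
  obtain ⟨q, -, hq⟩ := level_mem E hacyc X
  exact rank_ge_of_path E hacyc W hW _ q hq
end
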